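/- For every ε > 0, m ≥ 0, and (x,t) ∈ εℤ² with t ≥ 2ε: (1) a₁(x,t−ε,m,ε) = (1/√(1+m²ε²))·(a₁(x−ε,t,m,ε) − mε·a₂(x+ε,t,m,ε)); and (2) a₂(x,t−ε,m,ε) = (1/√(1+m²ε²))·(a₂(x+ε,t,m,ε) + mε·a₁(x−ε,t,m,ε)). -/

import Mathlib

noncomputable section

/-- The `i`-th move of a checker path encoded as `f : Fin n → Bool`
(`true` = upwards-right move `(ε,ε)`, `false` = upwards-left move `(−ε,ε)`);
out-of-range indices default to `true`. -/
def fcStep {n : ℕ} (f : Fin n → Bool) (i : ℕ) : Bool :=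
  if h : i < n then f ⟨i, h⟩ else true

/-- The number of turns of the checker path `f`. -/
def fcTurns {n : ℕ} (f : Fin n → Bool) : ℕ :=
  ((Finset.range (n - 1)).filter fun i => fcStep f i ≠ fcStep f (i + 1)).card

/-- The position (in units of `ε`) of the checker path `f` after `i` moves,
starting from the origin. -/
def fcPos {n : ℕ} (f : Fin n → Bool) (i : ℕ) : ℤ :=
  ∑ j ∈ Finset.range i, (if fcStep f j then (1 : ℤ) else -1)

/-- Checker paths from `(0,0)` to `(εx, εn)` whose first step is to `(ε,ε)`. -/
def fcPaths (n : ℕ) (x : ℤ) : Finset (Fin n → Bool) :=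
  Finset.univ.filter fun f =>
    (∀ i : Fin n, (i : ℕ) = 0 → f i = true) ∧ fcPos f n = x

/-- The amplitude `a(εx, εn, m, ε)`. -/
def fcAmp (m ε : ℝ) (x : ℤ) (n : ℕ) : ℂ :=
  (((1 + m ^ 2 * ε ^ 2) ^ ((1 - (n : ℝ)) / 2) : ℝ) : ℂ) * Complex.I *
    ∑ f ∈ fcPaths n x, (-Complex.I * (m * ε)) ^ fcTurns f

/-- The probability `P(εx, εn, m, ε)` to find the electron at `(εx, εn)`. -/
def fcP (m ε : ℝ) (x : ℤ) (n : ℕ) : ℝ := ‖fcAmp m ε x n‖ ^ 2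

/-!
Split the path sum according to the last move. A path starts with a right move, so its number of
turns is even exactly when its last move is also a right move; as the turn weight `-imε` is
purely imaginary, paths ending with a right move contribute only to `a₂` and paths ending with a
left move only to `a₁`. Removing the last move turns these two partial sums at time `t` into a
Dirac-type recursion in the partial sums at time `t - ε` (a new turn costs one factor `-imε`),
and the normalising factor changes by `√(1 + m²ε²)` from one time step to the next.
-/

open Finset

namespace Complex

lemma im_pow_eq_zero_of_re_eq_zero {z : ℂ} (hz : z.re = 0) {j : ℕ} (hj : Even j) :
    (z ^ j).im = 0 := by
  have hsq : z ^ 2 = ((-z.im ^ 2 : ℝ) : ℂ) := by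
    apply Complex.ext <;> simp [sq, hz]
  obtain ⟨j, rfl⟩ := hj
  rw [← two_mul, pow_mul, hsq, ← ofReal_pow, ofReal_im]

lemma re_pow_eq_zero_of_re_eq_zero {z : ℂ} (hz : z.re = 0) {j : ℕ} (hj : Odd j) :
    (z ^ j).re = 0 := by
  obtain ⟨j, rfl⟩ := hj
  rw [pow_succ, mul_re, hz, im_pow_eq_zero_of_re_eq_zero hz (even_two_mul j)]
  ring

end Complex

lemma even_card_filter_ne_succ_iff (s : ℕ → Bool) (k : ℕ) :
    Even #{i ∈ range k | s i ≠ s (i + 1)} ↔ s 0 = s k := by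
  induction k with
  | zero => simp
  | succ k ih =>
    rw [range_add_one, filter_insert]
    by_cases h : s k = s (k + 1)
    · rw [if_neg (not_not.2 h), ih, h]
    · rw [if_pos h, card_insert_of_notMem (by simp), Nat.even_add_one, ih]
      cases h0 : s 0 <;> cases hk : s k <;> cases hk1 : s (k + 1) <;> simp_all

lemma rpow_one_sub_div_two_eq_mul_sqrt {A : ℝ} (hA : 0 < A) (k : ℕ) :
    A ^ ((1 - (k : ℝ)) / 2) = A ^ ((1 - ((k + 1 : ℕ) : ℝ)) / 2) * √A := by
  rw [Real.sqrt_eq_rpow, ← Real.rpow_add hA]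
  push_cast
  ring_nf

section Snoc

variable {k : ℕ} (g : Fin k → Bool) (b : Bool)

lemma fcStep_snoc_of_lt {i : ℕ} (hi : i < k) :
    fcStep (Fin.snoc g b : Fin (k + 1) → Bool) i = fcStep g i := by
  simp [fcStep, hi, Nat.lt_succ_of_lt hi, Fin.snoc]

lemma fcStep_snoc_self : fcStep (Fin.snoc g b : Fin (k + 1) → Bool) k = b := by
  simp [fcStep, Fin.snoc]

lemma fcStep_last (f : Fin (k + 1) → Bool) : fcStep f k = f (Fin.last k) := by
  simp [fcStep, Fin.last]

lemma fcPos_snoc_of_le {j : ℕ} (hj : j ≤ k) :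
    fcPos (Fin.snoc g b : Fin (k + 1) → Bool) j = fcPos g j :=
  sum_congr rfl fun i hi => by
    rw [fcStep_snoc_of_lt g b (lt_of_lt_of_le (mem_range.1 hi) hj)]

lemma fcPos_snoc_succ :
    fcPos (Fin.snoc g b : Fin (k + 1) → Bool) (k + 1) = fcPos g k + if b then 1 else -1 := by
  rw [fcPos, sum_range_succ, ← fcPos, fcPos_snoc_of_le g b le_rfl, fcStep_snoc_self]

end Snoc

lemma fcTurns_snoc {k : ℕ} (g : Fin (k + 1) → Bool) (b : Bool) :
    fcTurns (Fin.snoc g b : Fin (k + 2) → Bool) =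
      fcTurns g + if fcStep g k = b then 0 else 1 := by
  have hstep : ∀ i < k + 1, fcStep (Fin.snoc g b : Fin (k + 2) → Bool) i = fcStep g i :=
    fun i hi => fcStep_snoc_of_lt g b hi
  have hinit : (range k).filter (fun i => fcStep (Fin.snoc g b : Fin (k + 2) → Bool) i ≠
      fcStep (Fin.snoc g b : Fin (k + 2) → Bool) (i + 1)) =
      (range k).filter fun i => fcStep g i ≠ fcStep g (i + 1) :=
    filter_congr fun i hi => by
      rw [hstep i (by simp at hi; omega), hstep (i + 1) (by simp at hi; omega)]
  simp only [fcTurns, Nat.add_sub_cancel, range_add_one, filter_insert, hinit,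
    hstep k (Nat.lt_succ_self k), fcStep_snoc_self]
  by_cases h : fcStep g k = b <;> simp [h]

lemma mem_fcPaths {n : ℕ} {x : ℤ} {f : Fin n → Bool} :
    f ∈ fcPaths n x ↔ (∀ i : Fin n, (i : ℕ) = 0 → f i = true) ∧ fcPos f n = x := by
  simp [fcPaths]

lemma fcStep_zero_of_mem_fcPaths {k : ℕ} {x : ℤ} {f : Fin (k + 1) → Bool}
    (hf : f ∈ fcPaths (k + 1) x) : fcStep f 0 = true :=
  (mem_fcPaths.1 hf).1 0 rfl

lemma even_fcTurns_iff {k : ℕ} {x : ℤ} {f : Fin (k + 1) → Bool}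
    (hf : f ∈ fcPaths (k + 1) x) :
    Even (fcTurns f) ↔ fcStep f k = true := by
  rw [fcTurns, Nat.add_sub_cancel, even_card_filter_ne_succ_iff, fcStep_zero_of_mem_fcPaths hf,
    eq_comm]

lemma snoc_mem_fcPaths_iff {k : ℕ} {x : ℤ} (g : Fin (k + 1) → Bool) (b : Bool) :
    (Fin.snoc g b : Fin (k + 2) → Bool) ∈ fcPaths (k + 2) x ↔
      g ∈ fcPaths (k + 1) (x - if b then 1 else -1) := by
  have hfirst :
      (∀ i : Fin (k + 2), (i : ℕ) = 0 → (Fin.snoc g b : Fin (k + 2) → Bool) i = true) ↔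
      ∀ i : Fin (k + 1), (i : ℕ) = 0 → g i = true := by
    simp [Fin.snoc]
  rw [mem_fcPaths, mem_fcPaths, hfirst, fcPos_snoc_succ, eq_sub_iff_add_eq]

lemma sum_filter_fcPaths_last {k : ℕ} (x : ℤ) (b : Bool) (F : (Fin (k + 2) → Bool) → ℂ) :
    ∑ f ∈ (fcPaths (k + 2) x).filter (fun f => fcStep f (k + 1) = b), F f =
      ∑ g ∈ fcPaths (k + 1) (x - if b then 1 else -1), F (Fin.snoc g b) := by
  have hsnoc : ∀ f ∈ (fcPaths (k + 2) x).filter (fun f => fcStep f (k + 1) = b),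
      Fin.snoc (Fin.init f) b = f := fun f hf => by
    rw [← (mem_filter.1 hf).2, fcStep_last, Fin.snoc_init_self]
  refine sum_nbij' Fin.init (Fin.snoc · b) (fun f hf => ?_) (fun g hg => ?_) hsnoc
    (fun g _ => by simp) (fun f hf => by rw [hsnoc f hf])
  · rw [← snoc_mem_fcPaths_iff, hsnoc f hf]
    exact (mem_filter.1 hf).1
  · exact mem_filter.2 ⟨(snoc_mem_fcPaths_iff g b).2 hg, fcStep_snoc_self g b⟩

def fcSumByLastMove (z : ℂ) (n : ℕ) (x : ℤ) (b : Bool) : ℂ :=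
  ∑ f ∈ (fcPaths n x).filter (fun f => fcStep f (n - 1) = b), z ^ fcTurns f

lemma fcSumByLastMove_succ (z : ℂ) (k : ℕ) (x : ℤ) (b : Bool) :
    fcSumByLastMove z (k + 2) x b =
      fcSumByLastMove z (k + 1) (x - if b then 1 else -1) b +
        z * fcSumByLastMove z (k + 1) (x - if b then 1 else -1) (!b) := by
  rw [fcSumByLastMove, show k + 2 - 1 = k + 1 from rfl, sum_filter_fcPaths_last,
    fcSumByLastMove, fcSumByLastMove, Nat.add_sub_cancel, mul_sum,
    ← sum_filter_add_sum_filter_not _ (fun g => fcStep g k = b)]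
  simp only [fcTurns_snoc]
  congr 1
  · exact sum_congr rfl fun g hg => by rw [if_pos (mem_filter.1 hg).2, add_zero]
  · refine sum_congr (filter_congr fun g _ => by cases fcStep g k <;> cases b <;> simp)
      fun g hg => ?_
    rw [if_neg (by simp [(mem_filter.1 hg).2]), pow_succ, mul_comm]

lemma fcAmp_eq_fcSumByLastMove (m ε : ℝ) (x : ℤ) (n : ℕ) :
    fcAmp m ε x n = (((1 + m ^ 2 * ε ^ 2) ^ ((1 - (n : ℝ)) / 2) : ℝ) : ℂ) * Complex.I *
      (fcSumByLastMove (-Complex.I * (m * ε)) n x true +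
        fcSumByLastMove (-Complex.I * (m * ε)) n x false) := by
  rw [fcAmp, fcSumByLastMove, fcSumByLastMove,
    ← sum_filter_add_sum_filter_not _ (fun f => fcStep f (n - 1) = true)]
  simp only [Bool.not_eq_true]

lemma fcSumByLastMove_true_im {z : ℂ} (hz : z.re = 0) (k : ℕ) (x : ℤ) :
    (fcSumByLastMove z (k + 1) x true).im = 0 := by
  rw [fcSumByLastMove, Complex.im_sum]
  refine sum_eq_zero fun f hf => Complex.im_pow_eq_zero_of_re_eq_zero hz ?_
  rw [mem_filter] at hf
  exact (even_fcTurns_iff hf.1).2 hf.2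

lemma fcSumByLastMove_false_re {z : ℂ} (hz : z.re = 0) (k : ℕ) (x : ℤ) :
    (fcSumByLastMove z (k + 1) x false).re = 0 := by
  rw [fcSumByLastMove, Complex.re_sum]
  refine sum_eq_zero fun f hf => Complex.re_pow_eq_zero_of_re_eq_zero hz ?_
  rw [mem_filter] at hf
  rw [← Nat.not_even_iff_odd, even_fcTurns_iff hf.1]
  simpa using hf.2

lemma fcAmp_re (m ε : ℝ) (k : ℕ) (x : ℤ) :
    (fcAmp m ε x (k + 1)).re = -((1 + m ^ 2 * ε ^ 2) ^ ((1 - ((k + 1 : ℕ) : ℝ)) / 2) *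
      (fcSumByLastMove (-Complex.I * (m * ε)) (k + 1) x false).im) := by
  have hre : (-Complex.I * (m * ε)).re = 0 := by simp
  simp only [fcAmp_eq_fcSumByLastMove, Complex.mul_re, Complex.mul_im, Complex.add_re,
    Complex.add_im, fcSumByLastMove_true_im hre, fcSumByLastMove_false_re hre, Complex.ofReal_re,
    Complex.ofReal_im, Complex.I_re, Complex.I_im]
  ring

lemma fcAmp_im (m ε : ℝ) (k : ℕ) (x : ℤ) :
    (fcAmp m ε x (k + 1)).im = (1 + m ^ 2 * ε ^ 2) ^ ((1 - ((k + 1 : ℕ) : ℝ)) / 2) *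
      (fcSumByLastMove (-Complex.I * (m * ε)) (k + 1) x true).re := by
  have hre : (-Complex.I * (m * ε)).re = 0 := by simp
  simp only [fcAmp_eq_fcSumByLastMove, Complex.mul_re, Complex.mul_im, Complex.add_re,
    Complex.add_im, fcSumByLastMove_true_im hre, fcSumByLastMove_false_re hre, Complex.ofReal_re,
    Complex.ofReal_im, Complex.I_re, Complex.I_im]
  ring

theorem stmt14_general (m ε : ℝ) (X : ℤ) (n : ℕ) (hn : 2 ≤ n) :
    (fcAmp m ε X (n - 1)).re
        = (1 / Real.sqrt (1 + m ^ 2 * ε ^ 2)) *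
            ((fcAmp m ε (X - 1) n).re - m * ε * (fcAmp m ε (X + 1) n).im) ∧
    (fcAmp m ε X (n - 1)).im
        = (1 / Real.sqrt (1 + m ^ 2 * ε ^ 2)) *
            ((fcAmp m ε (X + 1) n).im + m * ε * (fcAmp m ε (X - 1) n).re) := by
  obtain ⟨k, rfl⟩ : ∃ k, n = k + 2 := ⟨n - 2, by omega⟩
  set c := -Complex.I * (m * ε)
  have hleft : (fcSumByLastMove c (k + 2) (X - 1) false).im =
      (fcSumByLastMove c (k + 1) X false).im - m * ε * (fcSumByLastMove c (k + 1) X true).re := by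
    simp [fcSumByLastMove_succ, c, sub_eq_add_neg]
  have hright : (fcSumByLastMove c (k + 2) (X + 1) true).re =
      (fcSumByLastMove c (k + 1) X true).re + m * ε * (fcSumByLastMove c (k + 1) X false).im := by
    simp [fcSumByLastMove_succ, c, sub_eq_add_neg]
  have hA : 0 < 1 + m ^ 2 * ε ^ 2 := by positivity
  have hscale := rpow_one_sub_div_two_eq_mul_sqrt hA (k + 1)
  have hsqrt := Real.div_sqrt (x := 1 + m ^ 2 * ε ^ 2)
  set s := (1 + m ^ 2 * ε ^ 2) ^ ((1 - ((k + 1 + 1 : ℕ) : ℝ)) / 2)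
  rw [show k + 2 - 1 = k + 1 from rfl, fcAmp_re, fcAmp_im, fcAmp_re, fcAmp_im, hleft, hright,
    hscale]
  constructor
  · linear_combination (fcSumByLastMove c (k + 1) X false).im * s * hsqrt
  · linear_combination -(fcSumByLastMove c (k + 1) X true).re * s * hsqrt

/-- Inverse Dirac equation: for a lattice point `(x,t) = (εX, εn)` with `t ≥ 2ε`. -/
theorem stmt14 (m ε : ℝ) (hε : 0 < ε) (hm : 0 ≤ m) (X : ℤ) (n : ℕ) (hn : 2 ≤ n) :
    (fcAmp m ε X (n - 1)).re
        = (1 / Real.sqrt (1 + m ^ 2 * ε ^ 2)) *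
            ((fcAmp m ε (X - 1) n).re - m * ε * (fcAmp m ε (X + 1) n).im) ∧
    (fcAmp m ε X (n - 1)).im
        = (1 / Real.sqrt (1 + m ^ 2 * ε ^ 2)) *
            ((fcAmp m ε (X + 1) n).im + m * ε * (fcAmp m ε (X - 1) n).re) :=
  stmt14_general m ε X n hn
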